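/- Let q > 1 be real, μ a complex number with |μ| = 1, and s a complex number with Re(s) > 0. Then the double series ∑_{m≥0} ∑_{n≥0} q^{-s(m+n)} · (∑_{ℓ=-m}^{n} μ^ℓ) converges and equals (1 + q^{-s}) / ((1 - q^{-s})(1 - μ q^{-s})(1 - μ^{-1} q^{-s})), where for μ = 1 the inner sum ∑_{ℓ=-m}^{n} μ^ℓ is interpreted as m + n + 1. -/

import Mathlib

/-!
Put `t = q^{-s}`, so `‖t‖ < 1`. Splitting `∑_{ℓ=-m}^{n} μ^ℓ` at `ℓ = 0` writes the summand as
`A m * t^n + t^m * B n - t^m * t^n` with `A m = t^m ∑_{a ≤ m} μ^{-a}` and `B n = t^n ∑_{b ≤ n} μ^b`.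
Since `|μ| = 1`, `A` and `B` are Cauchy products of two convergent geometric series, with sums
`1/((1 - μ⁻¹t)(1 - t))` and `1/((1 - μt)(1 - t))`; all three terms are then products of absolutely
summable sequences on `ℕ × ℕ`, and the value is a rational-function identity.
-/

open Finset

theorem sum_zpow_Icc_neg_natCast {K : Type*} [DivisionRing K] (x : K) (m n : ℕ) :
    ∑ ℓ ∈ Icc (-(m : ℤ)) n, x ^ ℓ =
      ∑ a ∈ range (m + 1), x⁻¹ ^ a + ∑ b ∈ range (n + 1), x ^ b - 1 := by
  induction n with
  | zero =>
    induction m with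
    | zero => simp
    | succ m ih =>
      rw [show -((m + 1 : ℕ) : ℤ) = -(m : ℤ) - 1 by push_cast; ring,
        ← insert_Icc_left_eq_Icc_sub_one (by omega), sum_insert (by simp), ih,
        sum_range_succ _ (m + 1), show -(m : ℤ) - 1 = -((m + 1 : ℕ) : ℤ) by push_cast; ring,
        zpow_neg, zpow_natCast, inv_pow]
      abel
  | succ n ih =>
    rw [Nat.cast_succ, ← insert_Icc_right_eq_Icc_add_one (by omega), sum_insert (by simp), ih,
      sum_range_succ _ (n + 1), ← Nat.cast_succ, zpow_natCast]
    abel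

theorem pow_mul_geom_sum_eq_sum_pow_mul_pow {R : Type*} [CommSemiring R] (t u : R) (m : ℕ) :
    t ^ m * ∑ a ∈ range (m + 1), u ^ a = ∑ a ∈ range (m + 1), (u * t) ^ a * t ^ (m - a) := by
  rw [mul_sum]
  refine sum_congr rfl fun a ha => ?_
  rw [mul_pow, mul_assoc, ← pow_add, Nat.add_sub_cancel' (Nat.lt_succ_iff.mp (mem_range.mp ha))]
  ring

theorem HasSum.mul_of_summable_norm {R ι ι' : Type*} [NormedRing R] [CompleteSpace R]
    {f : ι → R} {g : ι' → R} {a b : R} (hf : HasSum f a) (hg : HasSum g b)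
    (hf' : Summable fun i => ‖f i‖) (hg' : Summable fun i => ‖g i‖) :
    HasSum (fun p : ι × ι' => f p.1 * g p.2) (a * b) :=
  hf.mul hg (summable_mul_of_summable_norm hf' hg')

section Geometric

variable {K : Type*} [NormedField K] {t u : K}

theorem hasSum_pow_mul_geom_sum [CompleteSpace K] (ht : ‖t‖ < 1) (hut : ‖u * t‖ < 1) :
    HasSum (fun m => t ^ m * ∑ a ∈ range (m + 1), u ^ a) ((1 - u * t)⁻¹ * (1 - t)⁻¹) := by
  simp_rw [pow_mul_geom_sum_eq_sum_pow_mul_pow]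
  rw [← tsum_geometric_of_norm_lt_one hut, ← tsum_geometric_of_norm_lt_one ht]
  exact hasSum_sum_range_mul_of_summable_norm (summable_norm_geometric_of_norm_lt_one hut)
    (summable_norm_geometric_of_norm_lt_one ht)

theorem summable_norm_pow_mul_geom_sum (ht : ‖t‖ < 1) (hut : ‖u * t‖ < 1) :
    Summable fun m => ‖t ^ m * ∑ a ∈ range (m + 1), u ^ a‖ := by
  simp_rw [pow_mul_geom_sum_eq_sum_pow_mul_pow]
  exact summable_norm_sum_mul_range_of_summable_norm (summable_norm_geometric_of_norm_lt_one hut)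
    (summable_norm_geometric_of_norm_lt_one ht)

theorem hasSum_pow_add_mul_sum_zpow_Icc [CompleteSpace K] (ht : ‖t‖ < 1) {x : K} (hx : ‖x‖ = 1) :
    HasSum (fun p : ℕ × ℕ => t ^ (p.1 + p.2) * ∑ ℓ ∈ Icc (-(p.1 : ℤ)) p.2, x ^ ℓ)
      ((1 + t) / ((1 - t) * (1 - x * t) * (1 - x⁻¹ * t))) := by
  have hx0 : x ≠ 0 := norm_ne_zero_iff.mp (by simp [hx])
  have hxt : ‖x * t‖ < 1 := by rwa [norm_mul, hx, one_mul]
  have hxt' : ‖x⁻¹ * t‖ < 1 := by rwa [norm_mul, norm_inv, hx, inv_one, one_mul]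
  have hg := hasSum_geometric_of_norm_lt_one ht
  have hg' := summable_norm_geometric_of_norm_lt_one ht
  have hsum := ((hasSum_pow_mul_geom_sum ht hxt').mul_of_summable_norm hg
      (summable_norm_pow_mul_geom_sum ht hxt') hg').add
    (hg.mul_of_summable_norm (hasSum_pow_mul_geom_sum ht hxt) hg'
      (summable_norm_pow_mul_geom_sum ht hxt)) |>.sub (hg.mul_of_summable_norm hg hg' hg')
  have h1 := (isUnit_one_sub_of_norm_lt_one ht).ne_zero
  have h2 : 1 - t * x ≠ 0 := mul_comm x t ▸ (isUnit_one_sub_of_norm_lt_one hxt).ne_zero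
  have h3 : x - t ≠ 0 := by
    have := (isUnit_one_sub_of_norm_lt_one hxt').ne_zero
    rwa [show 1 - x⁻¹ * t = (x - t) / x by field_simp, div_ne_zero_iff, and_iff_left hx0] at this
  have hval : (1 + t) / ((1 - t) * (1 - x * t) * (1 - x⁻¹ * t)) =
      (1 - x⁻¹ * t)⁻¹ * (1 - t)⁻¹ * (1 - t)⁻¹ + (1 - t)⁻¹ * ((1 - x * t)⁻¹ * (1 - t)⁻¹) -
        (1 - t)⁻¹ * (1 - t)⁻¹ := by
    rw [show 1 - x⁻¹ * t = (x - t) / x by field_simp]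
    field_simp
    ring
  rw [hval]
  refine hsum.congr_fun fun p => ?_
  rw [sum_zpow_Icc_neg_natCast, pow_add]
  ring

end Geometric

theorem norm_ofReal_cpow_neg_lt_one {q : ℝ} (hq : 1 < q) {s : ℂ} (hs : 0 < s.re) :
    ‖(q : ℂ) ^ (-s)‖ < 1 := by
  rw [Complex.norm_cpow_eq_rpow_re_of_pos (by linarith)]
  exact Real.rpow_lt_one_of_one_lt_of_neg hq (by simpa using hs)

/-- The split unramified optimal-form zeta integral:
`∑_{m,n≥0} q^{-s(m+n)} (∑_{ℓ=-m}^{n} μ^ℓ) = (1+q^{-s})/((1-q^{-s})(1-μq^{-s})(1-μ⁻¹q^{-s}))`. -/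
theorem stmt_2 (q : ℝ) (hq : 1 < q) (μ : ℂ) (hμ : ‖μ‖ = 1)
    (s : ℂ) (hs : 0 < s.re) :
    HasSum
      (fun p : ℕ × ℕ =>
        (q : ℂ) ^ (-s * ((p.1 : ℂ) + (p.2 : ℂ))) *
          ∑ ℓ ∈ Finset.Icc (-(p.1 : ℤ)) (p.2 : ℤ), μ ^ ℓ)
      ((1 + (q : ℂ) ^ (-s)) /
        ((1 - (q : ℂ) ^ (-s)) * (1 - μ * (q : ℂ) ^ (-s)) *
          (1 - μ⁻¹ * (q : ℂ) ^ (-s)))) := by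
  refine (hasSum_pow_add_mul_sum_zpow_Icc (norm_ofReal_cpow_neg_lt_one hq hs) hμ).congr_fun
    fun p => ?_
  rw [show -s * ((p.1 : ℂ) + p.2) = ((p.1 + p.2 : ℕ) : ℂ) * -s by push_cast; ring,
    Complex.cpow_nat_mul]
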